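/- Let d ≥ 1, ζ > 0, δ > 0, and let σ ∈ L¹(ℝ^d) be real-valued with ∫ σ = m and ∫ |σ| ≤ M. Let (p_t)_{t ∈ (0,1]} be a family of measurable functions on ℝ^d such that for every t ∈ (0,1]: ∫|p_t| ≤ 1; |p_t(x)| ≤ c₂ t^{−ζ} for almost every x; |p_t(x)| ≤ c₃ for almost every x with |x| ≥ δ; and |(p_t*σ)(x)| + |σ(x)| ≤ c₁ for almost every x with |x| ≥ δ. For t ∈ (0,1] define q_t(x) = e^{tm} Σ_{n=0}^∞ ((−t)^n/n!) (p_t * σ^{*n})(x), where the n = 0 term is p_t(x); the series converges absolutely almost everywhere. Then there exists a constant C = C(d, ζ, δ, c₁, c₂, c₃, M, m) such that |q_t(x)| ≤ C for every t ∈ (0,1] and almost every x with |x| ≥ (⌊ζ⌋ ∨ 1) δ. -/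
import Mathlib

open MeasureTheory Convolution ContinuousLinearMap
open scoped Convolution

/-- Convolution of two functions on `ℝ^d` (Bochner integral). -/
noncomputable def convolve {d : ℕ} (f g : EuclideanSpace ℝ (Fin d) → ℝ) :
    EuclideanSpace ℝ (Fin d) → ℝ := fun x => ∫ y, f (x - y) * g y

/-- `convPowFun σ n = σ^{*(n+1)}`, the `(n+1)`-fold convolution power of `σ`. -/
noncomputable def convPowFun {d : ℕ} (σ : EuclideanSpace ℝ (Fin d) → ℝ) :
    ℕ → EuclideanSpace ℝ (Fin d) → ℝ
  | 0 => σ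
  | n + 1 => convolve (convPowFun σ n) σ

/-- `seriesTerm p σ n = p * σ^{*n}`, with the `n = 0` term equal to `p` itself. -/
noncomputable def seriesTerm {d : ℕ} (p σ : EuclideanSpace ℝ (Fin d) → ℝ) :
    ℕ → EuclideanSpace ℝ (Fin d) → ℝ
  | 0 => p
  | n + 1 => convolve p (convPowFun σ n)

section Infra
variable {d : ℕ}

lemma convolve_eq (f g : EuclideanSpace ℝ (Fin d) → ℝ) (x : EuclideanSpace ℝ (Fin d)) :
    convolve f g x = (g ⋆[ContinuousLinearMap.mul ℝ ℝ, volume] f) x := by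
  simp only [convolve, convolution_def, ContinuousLinearMap.mul_apply', mul_comm]

lemma convolve_eq' (f g : EuclideanSpace ℝ (Fin d) → ℝ) :
    convolve f g = (g ⋆[ContinuousLinearMap.mul ℝ ℝ, volume] f) :=
  funext (convolve_eq f g)

lemma convolve_comm (f g : EuclideanSpace ℝ (Fin d) → ℝ) (x : EuclideanSpace ℝ (Fin d)) :
    convolve f g x = convolve g f x := by
  have h := integral_sub_left_eq_self (fun y => f (x - y) * g y) volume x
  simp only [sub_sub_cancel] at h
  simp only [convolve, ← h]
  simp [mul_comm]

lemma convolve_integrable {f g : EuclideanSpace ℝ (Fin d) → ℝ}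
    (hf : Integrable f) (hg : Integrable g) : Integrable (convolve f g) := by
  rw [convolve_eq']
  exact hg.integrable_convolution (ContinuousLinearMap.mul ℝ ℝ) hf

lemma convolve_aesm {f g : EuclideanSpace ℝ (Fin d) → ℝ}
    (hf : Integrable f) (hg : Integrable g) :
    AEStronglyMeasurable (convolve f g) volume :=
  (convolve_integrable hf hg).aestronglyMeasurable

/-- `L¹` bound for the convolution. -/
lemma integral_abs_convolve_le {f g : EuclideanSpace ℝ (Fin d) → ℝ}
    (hf : Integrable f) (hg : Integrable g) :
    (∫ x, |convolve f g x|) ≤ (∫ x, |f x|) * (∫ x, |g x|) := by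
  have habs : Integrable (convolve (fun z => |f z|) (fun z => |g z|)) :=
    convolve_integrable hf.abs hg.abs
  have h1 : ∀ᵐ x : EuclideanSpace ℝ (Fin d),
      |convolve f g x| ≤ convolve (fun z => |f z|) (fun z => |g z|) x := by
    have hex : ∀ᵐ x : EuclideanSpace ℝ (Fin d),
        ConvolutionExistsAt g f x (ContinuousLinearMap.mul ℝ ℝ) volume :=
      Integrable.ae_convolution_exists (L := ContinuousLinearMap.mul ℝ ℝ) hg hf
    filter_upwards [hex] with x hx
    rw [convolve_eq, convolve_eq]
    calc |(g ⋆[ContinuousLinearMap.mul ℝ ℝ, volume] f) x|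
        ≤ ∫ y, ‖g y * f (x - y)‖ := by
          simpa [convolution_def] using norm_integral_le_integral_norm
            (fun y => g y * f (x - y))
      _ = ((fun z => |g z|) ⋆[ContinuousLinearMap.mul ℝ ℝ, volume] fun z => |f z|) x := by
          simp [convolution_def, abs_mul]
  calc (∫ x, |convolve f g x|)
      ≤ ∫ x, convolve (fun z => |f z|) (fun z => |g z|) x :=
        integral_mono_ae (convolve_integrable hf hg).abs habs h1
    _ = (∫ x, |f x|) * (∫ x, |g x|) := by
        rw [convolve_eq', integral_convolution (ContinuousLinearMap.mul ℝ ℝ) hg.abs hf.abs]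
        simp [mul_comm]

/-- Master pointwise bound for the convolution. -/
lemma convolve_le_of_bound {f g φ : EuclideanSpace ℝ (Fin d) → ℝ}
    (hf : AEStronglyMeasurable f volume) (hg : AEStronglyMeasurable g volume)
    (hφ : Integrable φ) (x : EuclideanSpace ℝ (Fin d))
    (hb : ∀ᵐ y : EuclideanSpace ℝ (Fin d), |f (x - y)| * |g y| ≤ φ y) :
    |convolve f g x| ≤ ∫ y, φ y := by
  have h1 : AEStronglyMeasurable (fun y : EuclideanSpace ℝ (Fin d) => f (x - y)) volume :=
    hf.comp_quasiMeasurePreserving (Measure.measurePreserving_sub_left volume x).quasiMeasurePreserving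
  have hms : AEStronglyMeasurable (fun y : EuclideanSpace ℝ (Fin d) => f (x - y) * g y) volume :=
    h1.mul hg
  have hb' : ∀ᵐ y : EuclideanSpace ℝ (Fin d), ‖f (x - y) * g y‖ ≤ φ y := by
    filter_upwards [hb] with y hy
    simpa [Real.norm_eq_abs, abs_mul] using hy
  have hFi : Integrable (fun y : EuclideanSpace ℝ (Fin d) => f (x - y) * g y) :=
    hφ.mono' hms hb'
  calc |convolve f g x| ≤ ∫ y, |f (x - y) * g y| := by
        simp only [convolve]
        exact norm_integral_le_integral_norm (fun y : EuclideanSpace ℝ (Fin d) => f (x - y) * g y)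
    _ ≤ ∫ y, φ y := by
        refine integral_mono_ae hFi.abs hφ ?_
        filter_upwards [hb] with y hy
        simpa [abs_mul] using hy

/-- Sup-norm times `L¹` bound. -/
lemma convolve_bound_sup {f g : EuclideanSpace ℝ (Fin d) → ℝ}
    (hf : AEStronglyMeasurable f volume) (hg : Integrable g) {a B : ℝ} (ha : 0 ≤ a)
    (hfb : ∀ᵐ z : EuclideanSpace ℝ (Fin d), |f z| ≤ a)
    (hB : (∫ z, |g z|) ≤ B) (x : EuclideanSpace ℝ (Fin d)) :
    |convolve f g x| ≤ a * B := by
  have hb : ∀ᵐ y : EuclideanSpace ℝ (Fin d), |f (x - y)| * |g y| ≤ a * |g y| := by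
    have h1 : ∀ᵐ y : EuclideanSpace ℝ (Fin d), |f (x - y)| ≤ a :=
      (Measure.measurePreserving_sub_left volume x).quasiMeasurePreserving.ae hfb
    filter_upwards [h1] with y hy
    exact mul_le_mul_of_nonneg_right hy (abs_nonneg _)
  have := convolve_le_of_bound hf hg.aestronglyMeasurable (hg.abs.const_mul a) x hb
  refine this.trans ?_
  rw [integral_const_mul]
  exact mul_le_mul_of_nonneg_left hB ha

/-- Off-diagonal split bound. -/
lemma convolve_bound_split {f g : EuclideanSpace ℝ (Fin d) → ℝ}
    (hfi : Integrable f) (hgi : Integrable g)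
    {a b r s A B : ℝ} (ha : 0 ≤ a) (hb : 0 ≤ b)
    (hfb : ∀ᵐ z : EuclideanSpace ℝ (Fin d), r ≤ ‖z‖ → |f z| ≤ a)
    (hgb : ∀ᵐ z : EuclideanSpace ℝ (Fin d), s ≤ ‖z‖ → |g z| ≤ b)
    (hA : (∫ z, |f z|) ≤ A) (hB : (∫ z, |g z|) ≤ B)
    (x : EuclideanSpace ℝ (Fin d)) (hx : r + s ≤ ‖x‖) :
    |convolve f g x| ≤ a * B + b * A := by
  set φ : EuclideanSpace ℝ (Fin d) → ℝ := fun y => a * |g y| + b * |f (x - y)| with hφdef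
  have hφi : Integrable φ := (hgi.abs.const_mul a).add ((hfi.abs.comp_sub_left x).const_mul b)
  have hae : ∀ᵐ y : EuclideanSpace ℝ (Fin d), |f (x - y)| * |g y| ≤ φ y := by
    have h1 : ∀ᵐ y : EuclideanSpace ℝ (Fin d), r ≤ ‖x - y‖ → |f (x - y)| ≤ a :=
      (Measure.measurePreserving_sub_left volume x).quasiMeasurePreserving.ae hfb
    filter_upwards [h1, hgb] with y h1y h2y
    rcases le_or_gt r ‖x - y‖ with h | h
    · have h' := mul_le_mul_of_nonneg_right (h1y h) (abs_nonneg (g y))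
      have : 0 ≤ b * |f (x - y)| := mul_nonneg hb (abs_nonneg _)
      simp only [hφdef]; linarith
    · have hy' : s ≤ ‖y‖ := by
        have h2 : ‖x‖ ≤ ‖x - y‖ + ‖y‖ := by
          simpa using norm_add_le (x - y) y
        linarith
      have h' := mul_le_mul_of_nonneg_left (h2y hy') (abs_nonneg (f (x - y)))
      have : 0 ≤ a * |g y| := mul_nonneg ha (abs_nonneg _)
      simp only [hφdef]; nlinarith [abs_nonneg (f (x - y))]
  have hmain := convolve_le_of_bound hfi.aestronglyMeasurable hgi.aestronglyMeasurable hφi x hae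
  refine hmain.trans ?_
  have hint : (∫ y, φ y) = a * (∫ z, |g z|) + b * (∫ z, |f z|) := by
    rw [hφdef, integral_add (hgi.abs.const_mul a) ((hfi.abs.comp_sub_left x).const_mul b),
      integral_const_mul, integral_const_mul,
      integral_sub_left_eq_self (fun z => |f z|) volume x]
  rw [hint]
  have := mul_le_mul_of_nonneg_left hB ha
  have := mul_le_mul_of_nonneg_left hA hb
  linarith

/-- Associativity, a.e. -/
lemma convolve_assoc_ae {p σ h : EuclideanSpace ℝ (Fin d) → ℝ}
    (hp : Integrable p) (hσ : Integrable σ) (hh : Integrable h) :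
    ∀ᵐ x : EuclideanSpace ℝ (Fin d),
      convolve p (convolve h σ) x = convolve (convolve p σ) h x := by
  have hfg : ∀ᵐ y : EuclideanSpace ℝ (Fin d),
      ConvolutionExistsAt p σ y (ContinuousLinearMap.mul ℝ ℝ) volume :=
    Integrable.ae_convolution_exists (L := ContinuousLinearMap.mul ℝ ℝ) hp hσ
  have hgk : ∀ᵐ x : EuclideanSpace ℝ (Fin d),
      ConvolutionExistsAt (fun z => ‖σ z‖) (fun z => ‖h z‖) x
        (ContinuousLinearMap.mul ℝ ℝ) volume :=
    Integrable.ae_convolution_exists (L := ContinuousLinearMap.mul ℝ ℝ) hσ.norm hh.norm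
  have hfgk : ∀ᵐ x₀ : EuclideanSpace ℝ (Fin d),
      ConvolutionExistsAt (fun z => ‖p z‖)
        ((fun z => ‖σ z‖) ⋆[ContinuousLinearMap.mul ℝ ℝ, volume] fun z => ‖h z‖) x₀
        (ContinuousLinearMap.mul ℝ ℝ) volume :=
    Integrable.ae_convolution_exists (L := ContinuousLinearMap.mul ℝ ℝ) hp.norm
      (hσ.norm.integrable_convolution (ContinuousLinearMap.mul ℝ ℝ) hh.norm)
  filter_upwards [hfgk] with x₀ hx₀
  have hassoc :
      ((p ⋆[ContinuousLinearMap.mul ℝ ℝ, volume] σ) ⋆[ContinuousLinearMap.mul ℝ ℝ, volume] h) x₀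
        = (p ⋆[ContinuousLinearMap.mul ℝ ℝ, volume]
            (σ ⋆[ContinuousLinearMap.mul ℝ ℝ, volume] h)) x₀ :=
    convolution_assoc (ContinuousLinearMap.mul ℝ ℝ) (ContinuousLinearMap.mul ℝ ℝ)
      (ContinuousLinearMap.mul ℝ ℝ) (ContinuousLinearMap.mul ℝ ℝ)
      (fun a b c => mul_assoc a b c)
      hp.aestronglyMeasurable hσ.aestronglyMeasurable hh.aestronglyMeasurable hfg hgk hx₀
  have e1 : convolve p (convolve h σ) x₀
      = ((p ⋆[ContinuousLinearMap.mul ℝ ℝ, volume]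
          (σ ⋆[ContinuousLinearMap.mul ℝ ℝ, volume] h))) x₀ := by
    rw [convolve_comm p (convolve h σ), convolve_eq (convolve h σ) p, convolve_eq' h σ]
  have e2 : convolve (convolve p σ) h x₀
      = ((p ⋆[ContinuousLinearMap.mul ℝ ℝ, volume] σ)
          ⋆[ContinuousLinearMap.mul ℝ ℝ, volume] h) x₀ := by
    rw [convolve_comm (convolve p σ) h, convolve_eq h (convolve p σ),
      funext (convolve_comm p σ), convolve_eq' σ p]
  rw [e1, e2, hassoc]

end Infra

section ConvPow
variable {d : ℕ} {σ : EuclideanSpace ℝ (Fin d) → ℝ}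

lemma convPow_integrable (hσ : Integrable σ) : ∀ n, Integrable (convPowFun σ n)
  | 0 => hσ
  | n + 1 => convolve_integrable (convPow_integrable hσ n) hσ

lemma convPow_L1 (hσ : Integrable σ) {M : ℝ} (hM : (∫ z, |σ z|) ≤ M) (hM0 : 0 ≤ M) :
    ∀ n : ℕ, (∫ z, |convPowFun σ n z|) ≤ M ^ (n + 1) := by
  intro n
  induction n with
  | zero => simpa [convPowFun] using hM
  | succ k ih =>
      show (∫ z, |convolve (convPowFun σ k) σ z|) ≤ M ^ (k + 2)
      refine (integral_abs_convolve_le (convPow_integrable hσ k) hσ).trans ?_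
      calc (∫ z, |convPowFun σ k z|) * (∫ z, |σ z|) ≤ M ^ (k + 1) * M :=
            mul_le_mul ih hM (integral_nonneg fun z => abs_nonneg _) (pow_nonneg hM0 _)
        _ = M ^ (k + 2) := by ring

lemma convPow_offdiag (hσ : Integrable σ) {δ c₁ M : ℝ}
    (hc : 0 ≤ c₁) (hM : (∫ z, |σ z|) ≤ M) (hM0 : 0 ≤ M)
    (hσb : ∀ᵐ z : EuclideanSpace ℝ (Fin d), δ ≤ ‖z‖ → |σ z| ≤ c₁) :
    ∀ n : ℕ, ∀ᵐ y : EuclideanSpace ℝ (Fin d),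
      (((n : ℝ) + 1) * δ ≤ ‖y‖ → |convPowFun σ n y| ≤ ((n : ℝ) + 1) * c₁ * M ^ n) := by
  intro n
  induction n with
  | zero =>
      filter_upwards [hσb] with y hy hy'
      have h1 : δ ≤ ‖y‖ := by push_cast at hy'; linarith
      simpa [convPowFun] using hy h1
  | succ k ih =>
      refine Filter.Eventually.of_forall (fun y hy => ?_)
      show |convolve (convPowFun σ k) σ y| ≤ _
      have hsplit := convolve_bound_split (convPow_integrable hσ k) hσ
        (a := ((k : ℝ) + 1) * c₁ * M ^ k) (b := c₁) (r := ((k : ℝ) + 1) * δ) (s := δ)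
        (A := M ^ (k + 1)) (B := M) (by positivity) hc ih hσb
        (convPow_L1 hσ hM hM0 k) hM y (by push_cast at hy ⊢; linarith)
      refine hsplit.trans (le_of_eq ?_)
      push_cast
      ring

end ConvPow

/-- Auxiliary: the `n`-th term of the perturbation series. -/
noncomputable def myF {d : ℕ} (t : ℝ) (p σ : EuclideanSpace ℝ (Fin d) → ℝ)
    (x : EuclideanSpace ℝ (Fin d)) : ℕ → ℝ :=
  fun n => ((-t) ^ n / (n.factorial : ℝ)) * seriesTerm p σ n x

lemma abs_myF {d : ℕ} {t : ℝ} (ht : 0 < t) (p σ : EuclideanSpace ℝ (Fin d) → ℝ)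
    (x : EuclideanSpace ℝ (Fin d)) (n : ℕ) :
    |myF t p σ x n| = t ^ n / (n.factorial : ℝ) * |seriesTerm p σ n x| := by
  rw [myF, abs_mul, abs_div, abs_pow, abs_neg, abs_of_pos ht, Nat.abs_cast]

set_option maxHeartbeats 2000000 in
/-- Boundedness of the perturbed transition density
`q_t = e^{tm} Σ_{n≥0} ((-t)^n/n!) (p_t * σ^{*n})` away from the origin: under
`∫|p_t| ≤ 1`, `|p_t| ≤ c₂ t^{-ζ}` a.e., `|p_t| ≤ c₃` a.e. on `{|x| ≥ δ}`, and
`|(p_t*σ)| + |σ| ≤ c₁` a.e. on `{|x| ≥ δ}`, the series converges absolutely a.e.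
and `|q_t(x)| ≤ C` for every `t ∈ (0,1]` and a.e. `|x| ≥ (⌊ζ⌋ ∨ 1) δ`. -/
theorem perturbed_density_bounded (d : ℕ) (hd : 1 ≤ d)
    (ζ δ : ℝ) (hζ : 0 < ζ) (hδ : 0 < δ)
    (σ : EuclideanSpace ℝ (Fin d) → ℝ) (hσint : Integrable σ)
    (m M : ℝ) (hm : (∫ x, σ x) = m) (hM : (∫ x, |σ x|) ≤ M)
    (c₁ c₂ c₃ : ℝ)
    (p : ℝ → EuclideanSpace ℝ (Fin d) → ℝ)
    (hpmeas : ∀ t ∈ Set.Ioc (0 : ℝ) 1, Measurable (p t))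
    (hpint : ∀ t ∈ Set.Ioc (0 : ℝ) 1, Integrable (p t))
    (hpL1 : ∀ t ∈ Set.Ioc (0 : ℝ) 1, (∫ x, |p t x|) ≤ 1)
    (hpdiag : ∀ t ∈ Set.Ioc (0 : ℝ) 1,
      ∀ᵐ x : EuclideanSpace ℝ (Fin d), |p t x| ≤ c₂ * t ^ (-ζ))
    (hpoff : ∀ t ∈ Set.Ioc (0 : ℝ) 1,
      ∀ᵐ x : EuclideanSpace ℝ (Fin d), δ ≤ ‖x‖ → |p t x| ≤ c₃)
    (hconv : ∀ t ∈ Set.Ioc (0 : ℝ) 1,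
      ∀ᵐ x : EuclideanSpace ℝ (Fin d), δ ≤ ‖x‖ →
        |convolve (p t) σ x| + |σ x| ≤ c₁) :
    ∃ C : ℝ, 0 < C ∧
      ∀ t ∈ Set.Ioc (0 : ℝ) 1,
        ∀ᵐ x : EuclideanSpace ℝ (Fin d),
          ((max (Nat.floor ζ) 1 : ℕ) : ℝ) * δ ≤ ‖x‖ →
            (Summable fun n : ℕ =>
              |((-t) ^ n / (n.factorial : ℝ)) * seriesTerm (p t) σ n x|) ∧
            |Real.exp (t * m) * ∑' n : ℕ,
                ((-t) ^ n / (n.factorial : ℝ)) * seriesTerm (p t) σ n x| ≤ C := by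
  classical
  have hM0 : 0 ≤ M := le_trans (integral_nonneg fun x => abs_nonneg _) hM
  set N : ℕ := max (Nat.floor ζ) 1 with hNdef
  have hN1 : 1 ≤ N := le_max_right _ _
  have hNζ : Nat.floor ζ ≤ N := le_max_left _ _
  set c₁' : ℝ := max c₁ 0 with hc₁def
  set c₂' : ℝ := max c₂ 0 with hc₂def
  set c₃' : ℝ := max c₃ 0 with hc₃def
  have hc₁0 : 0 ≤ c₁' := le_max_right _ _
  have hc₂0 : 0 ≤ c₂' := le_max_right _ _
  have hc₃0 : 0 ≤ c₃' := le_max_right _ _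
  have hM1 : (1 : ℝ) ≤ M + 1 := by linarith
  set D : ℝ := c₃' + ((N : ℝ) + 2) * c₁' * (M + 1) ^ (N + 1) with hDdef
  have hD0 : 0 ≤ D := by positivity
  set EM : ℝ := ∑' n : ℕ, M ^ n / (n.factorial : ℝ) with hEMdef
  have hEM0 : 0 ≤ EM := tsum_nonneg fun n => by positivity
  have h1mem : (1 : ℝ) ∈ Set.Ioc (0 : ℝ) 1 := ⟨one_pos, le_refl 1⟩
  have hσb : ∀ᵐ z : EuclideanSpace ℝ (Fin d), δ ≤ ‖z‖ → |σ z| ≤ c₁' := by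
    filter_upwards [hconv 1 h1mem] with z hz hz'
    have h1 := hz hz'
    have h0 : 0 ≤ |convolve (p 1) σ z| := abs_nonneg _
    have : |σ z| ≤ c₁ := by linarith
    exact this.trans (le_max_left _ _)
  have hX0 : 0 ≤ ((N : ℝ) + 1) * D + c₂' * EM :=
    add_nonneg (mul_nonneg (by positivity) hD0) (mul_nonneg hc₂0 hEM0)
  have hC0 : 0 < Real.exp |m| * (((N : ℝ) + 1) * D + c₂' * EM) + 1 := by
    have := mul_nonneg (Real.exp_pos |m|).le hX0
    linarith
  refine ⟨Real.exp |m| * (((N : ℝ) + 1) * D + c₂' * EM) + 1, hC0, ?_⟩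
  intro t ht
  obtain ⟨ht0, ht1⟩ := ht
  have htmem : t ∈ Set.Ioc (0 : ℝ) 1 := ⟨ht0, ht1⟩
  have hpi := hpint t htmem
  have hp1 := hpL1 t htmem
  have hrp0 : 0 ≤ c₂' * t ^ (-ζ) := mul_nonneg hc₂0 (Real.rpow_nonneg ht0.le _)
  have hdiag : ∀ᵐ x : EuclideanSpace ℝ (Fin d), |p t x| ≤ c₂' * t ^ (-ζ) := by
    filter_upwards [hpdiag t htmem] with x hx
    exact hx.trans (mul_le_mul_of_nonneg_right (le_max_left _ _) (Real.rpow_nonneg ht0.le _))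
  -- sup bounds, valid at every point
  have hsup : ∀ (n : ℕ) (x : EuclideanSpace ℝ (Fin d)),
      |seriesTerm (p t) σ (n + 1) x| ≤ (c₂' * t ^ (-ζ)) * M ^ (n + 1) := by
    intro n x
    show |convolve (p t) (convPowFun σ n) x| ≤ _
    exact convolve_bound_sup hpi.aestronglyMeasurable (convPow_integrable hσint n) hrp0
      hdiag (convPow_L1 hσint hM hM0 n) x
  -- off-diagonal bounds for n ≤ N
  have hpσi : Integrable (convolve (p t) σ) := convolve_integrable hpi hσint
  have hpσ1 : (∫ z, |convolve (p t) σ z|) ≤ M := by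
    refine (integral_abs_convolve_le hpi hσint).trans ?_
    have h2 := mul_le_mul hp1 hM (integral_nonneg fun z => abs_nonneg _) zero_le_one
    simpa using h2
  have hpσb : ∀ᵐ z : EuclideanSpace ℝ (Fin d), δ ≤ ‖z‖ → |convolve (p t) σ z| ≤ c₁' := by
    filter_upwards [hconv t htmem] with z hz hz'
    have h1 := hz hz'
    have h0 : 0 ≤ |σ z| := abs_nonneg _
    have : |convolve (p t) σ z| ≤ c₁ := by linarith
    exact this.trans (le_max_left _ _)
  have hNδ : δ ≤ (N : ℝ) * δ := by
    have h1 : (1 : ℝ) ≤ (N : ℝ) := by exact_mod_cast hN1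
    nlinarith
  have hoff : ∀ n : ℕ, n ≤ N → ∀ᵐ x : EuclideanSpace ℝ (Fin d),
      ((N : ℝ) * δ ≤ ‖x‖ → |seriesTerm (p t) σ n x| ≤ D) := by
    intro n hn
    match n with
    | 0 =>
        filter_upwards [hpoff t htmem] with x hx hx'
        have h1 : |p t x| ≤ c₃ := hx (hNδ.trans hx')
        have h2 : |p t x| ≤ c₃' := h1.trans (le_max_left _ _)
        show |p t x| ≤ D
        have h3 : 0 ≤ ((N : ℝ) + 2) * c₁' * (M + 1) ^ (N + 1) := by positivity
        rw [hDdef]; linarith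
    | 1 =>
        filter_upwards [hpσb] with x hx hx'
        have h1 : |convolve (p t) σ x| ≤ c₁' := hx (hNδ.trans hx')
        show |convolve (p t) (convPowFun σ 0) x| ≤ D
        have h4 : (1 : ℝ) ≤ (M + 1) ^ (N + 1) := one_le_pow₀ hM1
        have hN0 : (0 : ℝ) ≤ (N : ℝ) := Nat.cast_nonneg N
        have h5 : c₁' ≤ ((N : ℝ) + 2) * c₁' * (M + 1) ^ (N + 1) := by
          have hin : (1 : ℝ) ≤ ((N : ℝ) + 2) * (M + 1) ^ (N + 1) := by nlinarith
          have := mul_le_mul_of_nonneg_left hin hc₁0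
          linarith [this]
        have : |convolve (p t) (convPowFun σ 0) x| = |convolve (p t) σ x| := rfl
        rw [this, hDdef]; linarith
    | (k + 2) =>
        have heq : ∀ᵐ x : EuclideanSpace ℝ (Fin d),
            seriesTerm (p t) σ (k + 2) x
              = convolve (convolve (p t) σ) (convPowFun σ k) x := by
          filter_upwards [convolve_assoc_ae hpi hσint (convPow_integrable hσint k)] with x hx
          exact hx
        filter_upwards [heq] with x hx hx'
        rw [hx]
        have hk2N : ((k : ℝ) + 2) ≤ (N : ℝ) := by exact_mod_cast hn
        have hxbig : δ + ((k : ℝ) + 1) * δ ≤ ‖x‖ := by nlinarith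
        have hsplit := convolve_bound_split hpσi (convPow_integrable hσint k)
          (a := c₁') (b := ((k : ℝ) + 1) * c₁' * M ^ k) (r := δ) (s := ((k : ℝ) + 1) * δ)
          (A := M) (B := M ^ (k + 1)) hc₁0 (by positivity) hpσb
          (convPow_offdiag hσint hc₁0 hM hM0 hσb k) hpσ1 (convPow_L1 hσint hM hM0 k) x hxbig
        refine hsplit.trans ?_
        have h6 : M ^ (k + 1) ≤ (M + 1) ^ (N + 1) := by
          calc M ^ (k + 1) ≤ (M + 1) ^ (k + 1) :=
                pow_le_pow_left₀ hM0 (by linarith) _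
            _ ≤ (M + 1) ^ (N + 1) := by
                refine pow_le_pow_right₀ hM1 ?_
                have : k + 2 ≤ N := by exact_mod_cast hn
                omega
        have h7 : c₁' * M ^ (k + 1) + ((k : ℝ) + 1) * c₁' * M ^ k * M
            = ((k : ℝ) + 2) * c₁' * M ^ (k + 1) := by ring
        have h8 : ((k : ℝ) + 2) * c₁' * M ^ (k + 1)
            ≤ ((N : ℝ) + 2) * c₁' * (M + 1) ^ (N + 1) := by
          have h9 : 0 ≤ M ^ (k + 1) := pow_nonneg hM0 _
          have h10 : ((k : ℝ) + 2) ≤ (N : ℝ) + 2 := by linarith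
          have := mul_le_mul (mul_le_mul h10 le_rfl hc₁0 (by linarith)) h6 h9
            (by positivity)
          linarith
        have h11 : 0 ≤ c₃' := hc₃0
        rw [hDdef]; linarith
  have hoffall : ∀ᵐ x : EuclideanSpace ℝ (Fin d), ∀ n : ℕ,
      n ≤ N → ((N : ℝ) * δ ≤ ‖x‖ → |seriesTerm (p t) σ n x| ≤ D) := by
    rw [MeasureTheory.ae_all_iff]
    intro n
    by_cases h : n ≤ N
    · filter_upwards [hoff n h] with x hx _
      exact hx
    · exact Filter.Eventually.of_forall fun x hn => absurd hn h
  filter_upwards [hdiag, hoffall] with x hx1 hx2 hxnorm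
  have hxN : (N : ℝ) * δ ≤ ‖x‖ := hxnorm
  have hterm : ∀ n : ℕ, |seriesTerm (p t) σ n x| ≤ (c₂' * t ^ (-ζ)) * M ^ n := by
    intro n
    cases n with
    | zero => simpa [seriesTerm] using hx1
    | succ k => exact hsup k x
  have habs : ∀ n : ℕ, |myF t (p t) σ x n|
      ≤ (c₂' * t ^ (-ζ)) * ((t * M) ^ n / (n.factorial : ℝ)) := by
    intro n
    rw [abs_myF ht0]
    have hfpos : (0 : ℝ) < (n.factorial : ℝ) := by exact_mod_cast n.factorial_pos
    calc t ^ n / (n.factorial : ℝ) * |seriesTerm (p t) σ n x|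
        ≤ t ^ n / (n.factorial : ℝ) * ((c₂' * t ^ (-ζ)) * M ^ n) :=
          mul_le_mul_of_nonneg_left (hterm n) (by positivity)
      _ = (c₂' * t ^ (-ζ)) * ((t * M) ^ n / (n.factorial : ℝ)) := by
          rw [mul_pow]; ring
  have hsummaj : Summable fun n : ℕ => (c₂' * t ^ (-ζ)) * ((t * M) ^ n / (n.factorial : ℝ)) :=
    (Real.summable_pow_div_factorial (t * M)).mul_left _
  have hsum : Summable fun n : ℕ => |myF t (p t) σ x n| :=
    Summable.of_nonneg_of_le (fun n => abs_nonneg _) habs hsummaj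
  refine ⟨hsum, ?_⟩
  show |Real.exp (t * m) * ∑' n : ℕ, myF t (p t) σ x n| ≤ _
  have hfac1 : ∀ n : ℕ, (1 : ℝ) ≤ (n.factorial : ℝ) := fun n => by
    exact_mod_cast Nat.one_le_iff_ne_zero.mpr n.factorial_pos.ne'
  have hnormtsum : |∑' n : ℕ, myF t (p t) σ x n| ≤ ∑' n : ℕ, |myF t (p t) σ x n| := by
    simpa [Real.norm_eq_abs] using
      norm_tsum_le_tsum_norm (f := fun n => myF t (p t) σ x n)
        (by simpa [Real.norm_eq_abs] using hsum)
  have hsplitsum : (∑' n : ℕ, |myF t (p t) σ x n|)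
      = (∑ i ∈ Finset.range (N + 1), |myF t (p t) σ x i|)
        + ∑' k : ℕ, |myF t (p t) σ x (k + (N + 1))| :=
    (Summable.sum_add_tsum_nat_add (N + 1) hsum).symm
  have hpart : (∑ i ∈ Finset.range (N + 1), |myF t (p t) σ x i|) ≤ ((N : ℝ) + 1) * D := by
    have hb : ∀ i ∈ Finset.range (N + 1), |myF t (p t) σ x i| ≤ D := by
      intro i hi
      have hiN : i ≤ N := Nat.lt_succ_iff.mp (Finset.mem_range.mp hi)
      have h2 := hx2 i hiN hxN
      have h3 : t ^ i / (i.factorial : ℝ) ≤ 1 := by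
        apply div_le_one_of_le₀
        · exact (pow_le_one₀ ht0.le ht1).trans (hfac1 i)
        · positivity
      calc |myF t (p t) σ x i| = t ^ i / (i.factorial : ℝ) * |seriesTerm (p t) σ i x| :=
            abs_myF ht0 _ _ _ _
        _ ≤ 1 * D := mul_le_mul h3 h2 (abs_nonneg _) zero_le_one
        _ = D := one_mul D
    calc (∑ i ∈ Finset.range (N + 1), |myF t (p t) σ x i|)
        ≤ ∑ _i ∈ Finset.range (N + 1), D := Finset.sum_le_sum hb
      _ = ((N : ℝ) + 1) * D := by
          rw [Finset.sum_const, Finset.card_range, nsmul_eq_mul]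
          push_cast; ring
  have htail : (∑' k : ℕ, |myF t (p t) σ x (k + (N + 1))|) ≤ c₂' * EM := by
    have hgsum : Summable fun n : ℕ => c₂' * (M ^ n / (n.factorial : ℝ)) :=
      (Real.summable_pow_div_factorial M).mul_left _
    have hs1 : Summable fun k : ℕ => |myF t (p t) σ x (k + (N + 1))| :=
      (summable_nat_add_iff (N + 1)).mpr hsum
    have hs2 : Summable fun k : ℕ =>
        c₂' * (M ^ (k + (N + 1)) / ((k + (N + 1)).factorial : ℝ)) :=
      (summable_nat_add_iff (N + 1)).mpr hgsum
    have hle : ∀ k : ℕ, |myF t (p t) σ x (k + (N + 1))|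
        ≤ c₂' * (M ^ (k + (N + 1)) / ((k + (N + 1)).factorial : ℝ)) := by
      intro k
      have hζn : ζ ≤ ((k + (N + 1) : ℕ) : ℝ) := by
        have h1 : ζ < (Nat.floor ζ : ℝ) + 1 := Nat.lt_floor_add_one ζ
        have h2 : Nat.floor ζ + 1 ≤ k + (N + 1) := by omega
        have h3 : ((Nat.floor ζ + 1 : ℕ) : ℝ) ≤ ((k + (N + 1) : ℕ) : ℝ) := by
          exact_mod_cast h2
        push_cast at h3 ⊢
        linarith
      have hp1' : t ^ (k + (N + 1)) * t ^ (-ζ) ≤ 1 := by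
        rw [← Real.rpow_natCast t (k + (N + 1)), ← Real.rpow_add ht0]
        exact Real.rpow_le_one ht0.le ht1 (by linarith)
      have hfpos : (0 : ℝ) < ((k + (N + 1)).factorial : ℝ) := by
        exact_mod_cast (k + (N + 1)).factorial_pos
      calc |myF t (p t) σ x (k + (N + 1))|
          ≤ t ^ (k + (N + 1)) / ((k + (N + 1)).factorial : ℝ)
            * ((c₂' * t ^ (-ζ)) * M ^ (k + (N + 1))) := by
            rw [abs_myF ht0]
            exact mul_le_mul_of_nonneg_left (hterm _) (by positivity)
        _ = (t ^ (k + (N + 1)) * t ^ (-ζ))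
            * (c₂' * (M ^ (k + (N + 1)) / ((k + (N + 1)).factorial : ℝ))) := by ring
        _ ≤ 1 * (c₂' * (M ^ (k + (N + 1)) / ((k + (N + 1)).factorial : ℝ))) :=
            mul_le_mul_of_nonneg_right hp1' (by positivity)
        _ = c₂' * (M ^ (k + (N + 1)) / ((k + (N + 1)).factorial : ℝ)) := one_mul _
    have h1 := Summable.tsum_le_tsum hle hs1 hs2
    have h3 := Summable.sum_add_tsum_nat_add (N + 1) hgsum
    have h4 : 0 ≤ ∑ i ∈ Finset.range (N + 1), c₂' * (M ^ i / (i.factorial : ℝ)) :=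
      Finset.sum_nonneg fun i _ => by positivity
    have h5 : (∑' n : ℕ, c₂' * (M ^ n / (n.factorial : ℝ))) = c₂' * EM := by
      rw [hEMdef]; exact tsum_mul_left
    linarith
  have hexp : Real.exp (t * m) ≤ Real.exp |m| := by
    apply Real.exp_le_exp.mpr
    calc t * m ≤ t * |m| := mul_le_mul_of_nonneg_left (le_abs_self m) ht0.le
      _ ≤ 1 * |m| := mul_le_mul_of_nonneg_right ht1 (abs_nonneg m)
      _ = |m| := one_mul _
  calc |Real.exp (t * m) * ∑' n : ℕ, myF t (p t) σ x n|
      = Real.exp (t * m) * |∑' n : ℕ, myF t (p t) σ x n| := by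
        rw [abs_mul, abs_of_pos (Real.exp_pos _)]
    _ ≤ Real.exp |m| * (∑' n : ℕ, |myF t (p t) σ x n|) :=
        mul_le_mul hexp hnormtsum (abs_nonneg _) (Real.exp_pos _).le
    _ ≤ Real.exp |m| * (((N : ℝ) + 1) * D + c₂' * EM) := by
        have := hpart
        have := htail
        have h12 : (∑' n : ℕ, |myF t (p t) σ x n|) ≤ ((N : ℝ) + 1) * D + c₂' * EM := by
          rw [hsplitsum]; linarith
        exact mul_le_mul_of_nonneg_left h12 (Real.exp_pos _).le
    _ ≤ Real.exp |m| * (((N : ℝ) + 1) * D + c₂' * EM) + 1 :=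
        le_add_of_nonneg_right zero_le_one
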